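/- Let G be the graph product of a finite simple graph Γ = (V,E) with vertex groups (G_v)_{v∈V}. For every finite subgroup F of G there exists a subset C ⊆ V spanning a complete subgraph of Γ and an element g ∈ G such that gFg⁻¹ ⊆ G(C). -/

import Mathlib

/-!
A finite group acting on a tree by automorphisms that preserve a proper colouring fixes a vertex
(a centre of an orbit). Applied to the barycentric subdivision of the Bass–Serre tree of an
amalgamated product, this conjugates every finite subgroup into a factor.

For the theorem, induct on a finite set `S ⊆ V`, for finite subgroups of `G(S)`. If `S` is not
complete, pick non-adjacent `v₀ ≠ u₀` in `S`. The amalgam of `G(star of v₀ in S)` and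
`G(S ∖ {v₀})` over `G(link of v₀ in S)` maps to `G`, and this map has a section over `G(S)`.
So a finite subgroup of `G(S)` is conjugate into one of the two factors, each of which is `G(S')`
for a proper subset `S'` of `S`.
-/

open Monoid

/-- The set of commutator relators defining a graph product. -/
def graphProdRels {V : Type*} (Γ : SimpleGraph V) (G : V → Type*) [∀ v, Group (G v)] :
    Set (CoprodI G) :=
  {x | ∃ (u v : V) (_ : Γ.Adj u v) (g : G u) (h : G v),
    x = (CoprodI.of g)⁻¹ * (CoprodI.of h)⁻¹ * CoprodI.of g * CoprodI.of h}

/-- The graph product of the graph of groups `(Γ, G)`: the quotient of the free product of the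
vertex groups by the normal closure of the commutators of elements of pairs of adjacent vertex
groups. -/
def GraphProduct {V : Type*} (Γ : SimpleGraph V) (G : V → Type*) [∀ v, Group (G v)] : Type _ :=
  CoprodI G ⧸ Subgroup.normalClosure (graphProdRels Γ G)

instance {V : Type*} (Γ : SimpleGraph V) (G : V → Type*) [∀ v, Group (G v)] :
    Group (GraphProduct Γ G) :=
  QuotientGroup.Quotient.group _

/-- The canonical map from a vertex group into the graph product. -/
def GraphProduct.of {V : Type*} (Γ : SimpleGraph V) (G : V → Type*) [∀ v, Group (G v)] (v : V) :
    G v →* GraphProduct Γ G :=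
  (QuotientGroup.mk' _).comp CoprodI.of

/-- `G(A)`: the subgroup of the graph product generated by the images of the vertex groups
`G_a`, `a ∈ A`. -/
def GraphProduct.vsub {V : Type*} (Γ : SimpleGraph V) (G : V → Type*) [∀ v, Group (G v)]
    (A : Set V) : Subgroup (GraphProduct Γ G) :=
  ⨆ a ∈ A, (GraphProduct.of Γ G a).range

namespace SimpleGraph

variable {X : Type*} {T : SimpleGraph X}

theorem Connected.dist_add_dist_of_mem_support (hT : T.Connected) {x y z : X} {p : T.Walk x y}
    (hp : p.length = T.dist x y) (hz : z ∈ p.support) :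
    T.dist x z + T.dist z y = T.dist x y := by
  classical
  have hsplit := congrArg Walk.length (p.take_spec hz)
  rw [Walk.length_append] at hsplit
  have := dist_le (p.takeUntil z hz)
  have := dist_le (p.dropUntil z hz)
  have : T.dist x y ≤ T.dist x z + T.dist z y := hT.dist_triangle
  omega

theorem IsTree.length_eq_dist_of_isPath (hT : T.IsTree) {x y : X} {p : T.Walk x y}
    (hp : p.IsPath) : p.length = T.dist x y := by
  obtain ⟨q, hq, hql⟩ := hT.connected.exists_path_of_dist x y
  rw [← hql, Subtype.mk.inj ((hT.isAcyclic.subsingleton_path x y).elim ⟨p, hp⟩ ⟨q, hq⟩)]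

theorem IsTree.dist_lt_or_dist_eq_add (hT : T.IsTree) (u : X) {x x' y : X} (hadj : T.Adj x x')
    (hxy : T.dist x' y + 1 = T.dist x y) :
    T.dist u x' < T.dist u x ∨ T.dist u y = T.dist u x + T.dist x y := by
  obtain ⟨s, hs, hsl⟩ := hT.connected.exists_path_of_dist u x
  obtain ⟨q, hq, hql⟩ := hT.connected.exists_path_of_dist x' y
  have hpl : (Walk.cons hadj q).length = T.dist x y := by rw [Walk.length_cons, hql, hxy]
  by_cases hsq : (s.append (Walk.cons hadj q)).IsPath
  · right
    rw [← hT.length_eq_dist_of_isPath hsq, Walk.length_append, hsl, hpl]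
  · left
    obtain ⟨z, hzs, hzq⟩ : ∃ z ∈ s.support, z ∈ q.support := by
      by_contra! hdisj
      refine hsq ((Walk.isPath_def _).2 ?_)
      rw [Walk.support_append, Walk.support_cons, List.tail_cons]
      exact List.nodup_append.2 ⟨hs.support_nodup, hq.support_nodup,
        fun a ha b hb hab => hdisj a ha (hab ▸ hb)⟩
    have h₁ := hT.connected.dist_add_dist_of_mem_support hsl hzs
    have h₂ := hT.connected.dist_add_dist_of_mem_support hql hzq
    have h₃ := hT.connected.dist_add_dist_of_mem_support hpl
      (by rw [Walk.support_cons]; exact List.mem_cons_of_mem _ hzq)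
    have : T.dist u x' ≤ T.dist u z + T.dist z x' := hT.connected.dist_triangle
    have : T.dist z x' = T.dist x' z := dist_comm
    have : T.dist z x = T.dist x z := dist_comm
    omega

theorem IsTree.exists_dist_lt_max (hT : T.IsTree) {x y : X} (hne : x ≠ y) (hnadj : ¬T.Adj x y) :
    ∃ x', ∀ u, T.dist u x' < max (T.dist u x) (T.dist u y) := by
  obtain ⟨p, -, hpl⟩ := hT.connected.exists_path_of_dist x y
  have h2 : 1 < T.dist x y := hT.connected.one_lt_dist_of_ne_of_not_adj hne hnadj
  cases p with
  | nil => exact absurd rfl hne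
  | @cons _ x' _ hadj q =>
    have hxy : T.dist x' y + 1 = T.dist x y := by
      have := dist_le q
      have : T.dist x y ≤ T.dist x x' + T.dist x' y := hT.connected.dist_triangle
      rw [dist_eq_one_iff_adj.2 hadj] at this
      rw [Walk.length_cons] at hpl
      omega
    refine ⟨x', fun u => ?_⟩
    have : T.dist u x' ≤ T.dist u x + T.dist x x' := hT.connected.dist_triangle
    rw [dist_eq_one_iff_adj.2 hadj] at this
    rcases hT.dist_lt_or_dist_eq_add u hadj hxy with h | h <;> omega

theorem Connected.dist_smul_le {M : Type*} [SMul M X] (hT : T.Connected)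
    (hadj : ∀ (f : M) {x y : X}, T.Adj x y → T.Adj (f • x) (f • y)) (f : M) (a b : X) :
    T.dist (f • a) (f • b) ≤ T.dist a b := by
  obtain ⟨p, hp⟩ := hT.exists_walk_length_eq_dist a b
  simpa [hp] using dist_le (p.map ⟨(f • ·), hadj f⟩)

/-- The circumcentre argument: the minimisers of the radius of an orbit are pairwise equal or
adjacent, and an invariant colouring rules out the second case. -/
theorem IsTree.exists_fixed_point {β M : Type*} [Group M] [Finite M] [MulAction M X]
    (hT : T.IsTree) (hadj : ∀ (f : M) {x y : X}, T.Adj x y → T.Adj (f • x) (f • y))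
    (c : T.Coloring β) (hc : ∀ (f : M) x, c (f • x) = c x) : ∃ x : X, ∀ f : M, f • x = x := by
  have := Fintype.ofFinite M
  have := hT.connected.nonempty
  let x₀ := Classical.arbitrary X
  have hdist (f : M) (a b : X) : T.dist (f • a) (f • b) = T.dist a b :=
    le_antisymm (hT.connected.dist_smul_le hadj f a b)
      (by simpa using hT.connected.dist_smul_le hadj f⁻¹ (f • a) (f • b))
  let r (x : X) : ℕ := Finset.univ.sup fun g : M => T.dist (g • x₀) x
  have hr_le (f : M) (x : X) : r (f • x) ≤ r x := by
    refine Finset.sup_le fun g _ => ?_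
    rw [← smul_inv_smul f (g • x₀), hdist, smul_smul]
    exact Finset.le_sup (f := fun g : M => T.dist (g • x₀) x) (Finset.mem_univ _)
  have hr (f : M) (x : X) : r (f • x) = r x :=
    le_antisymm (hr_le f x) (by simpa using hr_le f⁻¹ (f • x))
  obtain ⟨m, hm⟩ : ∃ m, ∀ x, r m ≤ r x := ⟨Function.argmin r, fun x => Function.argmin_le r x⟩
  refine ⟨m, fun f => ?_⟩
  by_contra hne
  obtain ⟨x', hx'⟩ := hT.exists_dist_lt_max hne fun h => c.valid h (hc f m)
  obtain ⟨g, -, hg⟩ := Finset.exists_mem_eq_sup Finset.univ Finset.univ_nonempty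
    fun g : M => T.dist (g • x₀) x'
  have h₁ : T.dist (g • x₀) (f • m) ≤ r m :=
    hr f m ▸ Finset.le_sup (f := fun g : M => T.dist (g • x₀) (f • m)) (Finset.mem_univ g)
  have h₂ : T.dist (g • x₀) m ≤ r m :=
    Finset.le_sup (f := fun g : M => T.dist (g • x₀) m) (Finset.mem_univ g)
  have h₃ : r m ≤ T.dist (g • x₀) x' := hg ▸ hm x'
  have h₄ := hx' (g • x₀)
  omega

end SimpleGraph

namespace Monoid.PushoutI

open SimpleGraph CoprodI

variable {ι H : Type*} [Group H] {K : ι → Type*} [∀ i, Group (K i)] {φ : ∀ i, H →* K i}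

variable (φ) in
/-- The vertices of the barycentric subdivision of the Bass–Serre tree of `PushoutI φ`: the left
cosets of the amalgamated subgroup and of the factors. -/
abbrev BassSerreVertex : Type _ :=
  (PushoutI φ ⧸ (base φ).range) ⊕ (Σ i, PushoutI φ ⧸ (of (φ := φ) i).range)

variable (φ) in
def baseVertex : BassSerreVertex φ := Sum.inl ((1 : PushoutI φ) : PushoutI φ ⧸ (base φ).range)

def factorVertex (i : ι) : BassSerreVertex φ :=
  Sum.inr ⟨i, ((1 : PushoutI φ) : PushoutI φ ⧸ (of (φ := φ) i).range)⟩

variable (φ) in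
def bassSerreGraph : SimpleGraph (BassSerreVertex φ) where
  Adj x y := ∃ (g : PushoutI φ) (i : ι),
    (x = g • baseVertex φ ∧ y = g • factorVertex i) ∨
      (x = g • factorVertex i ∧ y = g • baseVertex φ)
  symm := ⟨fun _ _ ⟨g, i, h⟩ => ⟨g, i, h.symm.imp And.symm And.symm⟩⟩
  loopless := ⟨fun _ ⟨g, i, h⟩ => by
    rcases h with ⟨rfl, h⟩ | ⟨rfl, h⟩ <;> simp [baseVertex, factorVertex] at h⟩

theorem smul_baseVertex_eq_iff {g : PushoutI φ} :
    g • baseVertex φ = baseVertex φ ↔ g ∈ (base φ).range := by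
  rw [baseVertex, Sum.smul_inl, Sum.inl.injEq, ← MulAction.mem_stabilizer_iff,
    MulAction.stabilizer_quotient]

theorem smul_factorVertex_eq_iff {g : PushoutI φ} {i j : ι} :
    g • factorVertex j = factorVertex (φ := φ) i ↔ j = i ∧ g ∈ (of (φ := φ) i).range := by
  rw [factorVertex, factorVertex, Sum.smul_inr, Sum.inr.injEq, Sigma.smul_mk, Sigma.mk.inj_iff]
  refine and_congr_right fun hji => ?_
  subst hji
  rw [heq_iff_eq, ← MulAction.mem_stabilizer_iff, MulAction.stabilizer_quotient]

theorem range_base_le_range_of (i : ι) : (base φ).range ≤ (of (φ := φ) i).range := by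
  rintro _ ⟨h, rfl⟩
  exact ⟨φ i h, of_apply_eq_base φ i h⟩

theorem adj_smul {x y : BassSerreVertex φ} (g : PushoutI φ) (h : (bassSerreGraph φ).Adj x y) :
    (bassSerreGraph φ).Adj (g • x) (g • y) := by
  obtain ⟨g', i, ⟨rfl, rfl⟩ | ⟨rfl, rfl⟩⟩ := h
  · exact ⟨g * g', i, .inl ⟨(mul_smul ..).symm, (mul_smul ..).symm⟩⟩
  · exact ⟨g * g', i, .inr ⟨(mul_smul ..).symm, (mul_smul ..).symm⟩⟩

variable (φ) in
def smulHom (g : PushoutI φ) : bassSerreGraph φ →g bassSerreGraph φ :=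
  ⟨(g • ·), adj_smul g⟩

theorem adj_smul_iff {x y : BassSerreVertex φ} (g : PushoutI φ) :
    (bassSerreGraph φ).Adj (g • x) (g • y) ↔ (bassSerreGraph φ).Adj x y :=
  ⟨fun h => by simpa using adj_smul g⁻¹ h, adj_smul g⟩

theorem adj_baseVertex_iff {z : BassSerreVertex φ} :
    (bassSerreGraph φ).Adj (baseVertex φ) z ↔ ∃ i, z = factorVertex i := by
  constructor
  · rintro ⟨g, i, ⟨hg, rfl⟩ | ⟨h, -⟩⟩
    · have hg := range_base_le_range_of i (smul_baseVertex_eq_iff.1 hg.symm)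
      exact ⟨i, smul_factorVertex_eq_iff.2 ⟨rfl, hg⟩⟩
    · simp [baseVertex, factorVertex] at h
  · rintro ⟨i, rfl⟩
    exact ⟨1, i, .inl ⟨(one_smul ..).symm, (one_smul ..).symm⟩⟩

theorem adj_factorVertex_iff {i : ι} {z : BassSerreVertex φ} :
    (bassSerreGraph φ).Adj (factorVertex i) z ↔
      ∃ k : K i, z = of (φ := φ) i k • baseVertex φ := by
  constructor
  · rintro ⟨g, j, ⟨h, -⟩ | ⟨hg, rfl⟩⟩
    · simp [baseVertex, factorVertex] at h
    · obtain ⟨rfl, k, rfl⟩ := smul_factorVertex_eq_iff.1 hg.symm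
      exact ⟨k, rfl⟩
  · rintro ⟨k, rfl⟩
    exact ⟨of i k, i, .inr ⟨(smul_factorVertex_eq_iff.2 ⟨rfl, k, rfl⟩).symm, rfl⟩⟩

theorem reachable_smul_baseVertex (g : PushoutI φ) :
    (bassSerreGraph φ).Reachable (baseVertex φ) (g • baseVertex φ) := by
  induction g using induction_on with
  | of i k =>
    have h₁ := adj_baseVertex_iff (φ := φ) |>.2 ⟨i, rfl⟩
    have h₂ := adj_factorVertex_iff (φ := φ) |>.2 ⟨k, rfl⟩
    exact h₁.reachable.trans h₂.reachable
  | base h => rw [smul_baseVertex_eq_iff.2 ⟨h, rfl⟩]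
  | mul x y hx hy => exact mul_smul x y (baseVertex φ) ▸ hx.trans (hy.map (smulHom φ x))

theorem exists_eq_smul_baseVertex_or_smul_factorVertex (x : BassSerreVertex φ) :
    ∃ g : PushoutI φ, x = g • baseVertex φ ∨ ∃ i, x = g • factorVertex i := by
  rcases x with a | ⟨i, b⟩
  · obtain ⟨g, rfl⟩ := QuotientGroup.mk_surjective a
    exact ⟨g, .inl (by simp [baseVertex])⟩
  · obtain ⟨g, rfl⟩ := QuotientGroup.mk_surjective b
    exact ⟨g, .inr ⟨i, by simp [factorVertex]⟩⟩

theorem connected_bassSerreGraph : (bassSerreGraph φ).Connected := by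
  have hreach (x : BassSerreVertex φ) : (bassSerreGraph φ).Reachable (baseVertex φ) x := by
    obtain ⟨g, rfl | ⟨i, rfl⟩⟩ := exists_eq_smul_baseVertex_or_smul_factorVertex x
    · exact reachable_smul_baseVertex g
    · exact (reachable_smul_baseVertex g).trans
        ((adj_smul_iff g).2 (adj_baseVertex_iff.2 ⟨i, rfl⟩)).reachable
  exact connected_iff_exists_forall_reachable _ |>.2 ⟨_, hreach⟩

theorem exists_eq_smul_factorVertex_of_adj {g : PushoutI φ} {y : BassSerreVertex φ}
    (h : (bassSerreGraph φ).Adj (g • baseVertex φ) y) : ∃ i, y = g • factorVertex i := by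
  rw [← smul_inv_smul g y, adj_smul_iff, adj_baseVertex_iff] at h
  obtain ⟨i, hi⟩ := h
  exact ⟨i, inv_smul_eq_iff.1 hi⟩

theorem exists_eq_mul_smul_baseVertex_of_adj {g : PushoutI φ} {i : ι} {y : BassSerreVertex φ}
    (h : (bassSerreGraph φ).Adj (g • factorVertex i) y) :
    ∃ k : K i, y = (g * of (φ := φ) i k) • baseVertex φ := by
  rw [← smul_inv_smul g y, adj_smul_iff, adj_factorVertex_iff] at h
  obtain ⟨k, hk⟩ := h
  exact ⟨k, by rw [mul_smul, ← hk, smul_inv_smul]⟩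

/-- The factors crossed by a path starting at `g • baseVertex φ` spell a reduced word. -/
theorem exists_reduced_word_of_isPath (g : PushoutI φ) {z : BassSerreVertex φ}
    (p : (bassSerreGraph φ).Walk (g • baseVertex φ) z) (hp : p.IsPath) :
    ∃ w : Word K, Reduced φ w ∧ (∀ i, w.fstIdx = some i → p.snd = g • factorVertex i) ∧
      p.length ≤ 2 * w.toList.length + 1 ∧
      (z = (g * ofCoprodI w.prod) • baseVertex φ ∨
        ∃ i, z = (g * ofCoprodI w.prod) • factorVertex i) := by
  induction hn : p.length using Nat.strong_induction_on generalizing g z p with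
  | _ n ih =>
  match p, hp with
  | .nil, _ =>
    exact ⟨.empty, by simp [Reduced], by simp [Word.fstIdx, Word.empty], by simp [← hn],
      .inl (by simp)⟩
  | .cons h₁ .nil, _ =>
    obtain ⟨i, rfl⟩ := exists_eq_smul_factorVertex_of_adj h₁
    exact ⟨.empty, by simp [Reduced], by simp [Word.fstIdx, Word.empty], by simp [← hn],
      .inr ⟨i, by simp⟩⟩
  | .cons h₁ (.cons h₂ p₂), hp =>
    obtain ⟨i, rfl⟩ := exists_eq_smul_factorVertex_of_adj h₁
    obtain ⟨k, rfl⟩ := exists_eq_mul_smul_baseVertex_of_adj h₂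
    have hk : k ∉ (φ i).range := by
      rintro ⟨h, rfl⟩
      obtain ⟨v, hv, rfl⟩ : ∃ v ∈ p₂.support, v = g • baseVertex φ :=
        ⟨_, p₂.start_mem_support,
          by rw [of_apply_eq_base, mul_smul, smul_baseVertex_eq_iff.2 ⟨h, rfl⟩]⟩
      exact ((Walk.cons_isPath_iff _ _).1 hp).2 (List.mem_cons_of_mem _ hv)
    obtain ⟨w, hw, hfst, hlen, hz⟩ :=
      ih p₂.length (by simp [← hn]) (g * of i k) p₂ hp.of_cons.of_cons rfl
    have hfst' : w.fstIdx ≠ some i := by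
      intro hi
      obtain ⟨v, hv, rfl⟩ : ∃ v ∈ p₂.support, v = g • factorVertex i :=
        ⟨p₂.snd, p₂.getVert_mem_support 1,
          by rw [hfst i hi, mul_smul, smul_factorVertex_eq_iff.2 ⟨rfl, k, rfl⟩]⟩
      exact ((Walk.cons_isPath_iff _ _).1 hp.of_cons).2 hv
    have hk1 : k ≠ 1 := fun h => hk ⟨1, by rw [h, map_one]⟩
    have hprod :
        g * ofCoprodI (Word.cons k w hfst' hk1).prod = g * of i k * ofCoprodI w.prod := by
      rw [Word.prod_cons, map_mul, ofCoprodI_of, mul_assoc]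
    refine ⟨.cons k w hfst' hk1, ?_, ?_, ?_, hprod ▸ hz⟩
    · rintro l (_ | ⟨_, hl⟩)
      exacts [hk, hw l hl]
    · simp [Word.fstIdx_cons]
    · rw [← hn]
      simp only [Walk.length_cons] at hlen ⊢
      simp [Word.cons]
      omega

theorem Reduced.ofCoprodI_prod_notMem_range_of (hφ : ∀ i, Function.Injective (φ i))
    {w : Word K} (hw : Reduced φ w) (hne : w ≠ .empty) {i : ι} (hi : w.fstIdx ≠ some i) :
    ofCoprodI w.prod ∉ (of (φ := φ) i).range := by
  rintro ⟨k, hk⟩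
  by_cases hkr : k ∈ (φ i).range
  · obtain ⟨h, rfl⟩ := hkr
    exact hne (hw.eq_empty_of_mem_range hφ ⟨h, by rw [← hk, of_apply_eq_base]⟩)
  · have hk1 : k⁻¹ ≠ 1 := fun h => hkr ⟨1, by rw [map_one, ← inv_eq_one.1 h]⟩
    have hw' : Reduced φ (.cons k⁻¹ w hi hk1) := by
      rintro l (_ | ⟨_, hl⟩)
      exacts [fun h => hkr (inv_mem_iff.1 h), hw l hl]
    have := hw'.eq_empty_of_mem_range hφ ⟨1, by
      rw [Word.prod_cons, map_mul, ofCoprodI_of, ← hk, map_inv, inv_mul_cancel, map_one]⟩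
    simp [Word.cons, Word.empty] at this

theorem isAcyclic_bassSerreGraph (hφ : ∀ i, Function.Injective (φ i)) :
    (bassSerreGraph φ).IsAcyclic := by
  -- A cycle at `g • baseVertex φ` leaves and returns through `g • factorVertex i`; the rest of
  -- it spells a nonempty reduced word not starting in `K i` whose product lies in `of i`.
  have hbase (g : PushoutI φ)
      (c : (bassSerreGraph φ).Walk (g • baseVertex φ) (g • baseVertex φ)) (hc : c.IsCycle) :
      False := by
    cases c with
    | nil => exact hc.not_nil Walk.nil_nil
    | cons h₁ q =>
      obtain ⟨i, rfl⟩ := exists_eq_smul_factorVertex_of_adj h₁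
      have hq : q.reverse.IsPath := ((Walk.cons_isCycle_iff q h₁).1 hc).1.reverse
      have hlen : 2 ≤ q.length := by
        have := hc.three_le_length
        rw [Walk.length_cons] at this
        omega
      obtain ⟨w, hw, hfst, hwlen, hz | ⟨j, hz⟩⟩ := exists_reduced_word_of_isPath g q.reverse hq
      · simp [factorVertex, baseVertex] at hz
      rw [mul_smul, smul_left_cancel_iff, eq_comm, smul_factorVertex_eq_iff] at hz
      obtain ⟨rfl, hmem⟩ := hz
      refine hw.ofCoprodI_prod_notMem_range_of hφ ?_ ?_ hmem
      · rintro rfl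
        simp [Word.empty] at hwlen
        omega
      · intro hj
        have hsnd : q.reverse.getVert 1 = q.reverse.getVert q.reverse.length := by
          rw [Walk.getVert_length]
          exact hfst j hj
        have := hq.getVert_injOn (by simp; omega) (by simp) hsnd
        simp at this
        omega
  intro v c hc
  obtain ⟨g, rfl | ⟨i, rfl⟩⟩ := exists_eq_smul_baseVertex_or_smul_factorVertex v
  · exact hbase g c hc
  · classical
    cases c with
    | nil => exact hc.not_nil Walk.nil_nil
    | cons h q =>
      obtain ⟨k, rfl⟩ := exists_eq_mul_smul_baseVertex_of_adj h
      have hy : (g * of i k) • baseVertex φ ∈ (Walk.cons h q).support :=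
        List.mem_cons_of_mem _ q.start_mem_support
      exact hbase _ _ (hc.rotate hy)

theorem isTree_bassSerreGraph (hφ : ∀ i, Function.Injective (φ i)) :
    (bassSerreGraph φ).IsTree :=
  ⟨connected_bassSerreGraph, isAcyclic_bassSerreGraph hφ⟩

variable (φ) in
def bassSerreColoring : (bassSerreGraph φ).Coloring Bool :=
  Coloring.mk Sum.isLeft fun ⟨_, _, h⟩ => by
    rcases h with ⟨rfl, rfl⟩ | ⟨rfl, rfl⟩ <;> simp [baseVertex, factorVertex]

theorem exists_mul_mul_inv_mem_range_of_finite [Nonempty ι]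
    (hφ : ∀ i, Function.Injective (φ i)) (F : Subgroup (PushoutI φ)) [Finite F] :
    ∃ (g : PushoutI φ) (i : ι), ∀ x ∈ F, g * x * g⁻¹ ∈ (of (φ := φ) i).range := by
  obtain ⟨v, hv⟩ := (isTree_bassSerreGraph hφ).exists_fixed_point (M := F)
    (fun f _ _ h => adj_smul (f : PushoutI φ) h) (bassSerreColoring φ)
    fun _ x => by cases x <;> rfl
  obtain ⟨g, rfl | ⟨i, rfl⟩⟩ := exists_eq_smul_baseVertex_or_smul_factorVertex v
  · refine ⟨g⁻¹, Classical.arbitrary ι, fun x hx => range_base_le_range_of _ ?_⟩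
    rw [← smul_baseVertex_eq_iff, inv_inv, mul_smul, mul_smul, ← Subgroup.mk_smul x hx, hv,
      inv_smul_smul]
  · refine ⟨g⁻¹, i, fun x hx => (smul_factorVertex_eq_iff (j := i)).1 ?_ |>.2⟩
    rw [inv_inv, mul_smul, mul_smul, ← Subgroup.mk_smul x hx, hv, inv_smul_smul]

end Monoid.PushoutI

namespace GraphProduct

variable {V : Type*} {Γ : SimpleGraph V} {G : V → Type*} [∀ v, Group (G v)]

theorem commute_of_adj {u v : V} (h : Γ.Adj u v) (g : G u) (k : G v) :
    Commute (of Γ G u g) (of Γ G v k) := by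
  have h₁ : (of Γ G v k * of Γ G u g)⁻¹ * (of Γ G u g * of Γ G v k) = 1 := by
    rw [mul_inv_rev, ← mul_assoc]
    exact (QuotientGroup.eq_one_iff _).2 (Subgroup.subset_normalClosure ⟨u, v, h, g, k, rfl⟩)
  exact (inv_mul_eq_one.1 h₁).symm

variable (Γ) in
def lift {K : Type*} [Group K] (f : ∀ v, G v →* K)
    (hf : ∀ u v, Γ.Adj u v → ∀ (g : G u) (k : G v), Commute (f u g) (f v k)) :
    GraphProduct Γ G →* K :=
  QuotientGroup.lift _ (CoprodI.lift f) <| Subgroup.normalClosure_le_normal <| by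
    rintro _ ⟨u, v, h, g, k, rfl⟩
    simp [mul_assoc, (hf u v h g k).eq]

@[simp]
theorem lift_of {K : Type*} [Group K] (f : ∀ v, G v →* K) (hf) (v : V) (g : G v) :
    lift Γ f hf (of Γ G v g) = f v g :=
  CoprodI.lift_of f g

theorem of_mem_vsub {A : Set V} {a : V} (ha : a ∈ A) (g : G a) : of Γ G a g ∈ vsub Γ G A :=
  le_iSup₂ (f := fun a (_ : a ∈ A) => (of Γ G a).range) a ha ⟨g, rfl⟩

theorem vsub_le {A : Set V} {H : Subgroup (GraphProduct Γ G)}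
    (h : ∀ a ∈ A, ∀ g : G a, of Γ G a g ∈ H) : vsub Γ G A ≤ H :=
  iSup₂_le fun a ha => by
    rintro _ ⟨g, rfl⟩
    exact h a ha g

theorem vsub_mono {A B : Set V} (h : A ⊆ B) : vsub Γ G A ≤ vsub Γ G B :=
  vsub_le fun _ ha g => of_mem_vsub (h ha) g

variable (Γ G) in
theorem vsub_univ : vsub Γ G Set.univ = ⊤ := by
  rw [eq_top_iff]
  rintro x -
  obtain ⟨x, rfl⟩ := QuotientGroup.mk_surjective x
  induction x using CoprodI.induction_on with
  | one => exact one_mem _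
  | of v g => exact of_mem_vsub (Set.mem_univ v) g
  | mul x y hx hy => exact mul_mem hx hy

variable (Γ G) in
def ofVsub {A : Set V} {v : V} (h : v ∈ A) : G v →* vsub Γ G A :=
  (of Γ G v).codRestrict _ (of_mem_vsub h)

theorem commute_ofVsub {A : Set V} {u v : V} (h : Γ.Adj u v) (hu : u ∈ A) (hv : v ∈ A)
    (g : G u) (k : G v) : Commute (ofVsub Γ G hu g) (ofVsub Γ G hv k) :=
  Subtype.ext (commute_of_adj h g k)

section Amalgam

variable (Γ G) (S : Set V) (v₀ : V)

/-- `G(S)` is the amalgamated product of the `G(amalgamSide Γ S v₀ b)` over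
`G(S ∩ Γ.neighborSet v₀)`. -/
def amalgamSide : Bool → Set V
  | true => insert v₀ (S ∩ Γ.neighborSet v₀)
  | false => S \ {v₀}

theorem link_subset_amalgamSide : ∀ b, S ∩ Γ.neighborSet v₀ ⊆ amalgamSide Γ S v₀ b
  | true => Set.subset_insert _ _
  | false => fun _ hw => ⟨hw.1, (Γ.ne_of_adj hw.2).symm⟩

variable {Γ S v₀} in
theorem amalgamSide_subset (hv₀ : v₀ ∈ S) : ∀ b, amalgamSide Γ S v₀ b ⊆ S
  | true => Set.insert_subset hv₀ Set.inter_subset_left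
  | false => Set.sdiff_subset

variable {Γ S v₀} in
theorem amalgamSide_ssubset (hv₀ : v₀ ∈ S) {u₀ : V} (hu₀ : u₀ ∈ S) (hne : v₀ ≠ u₀)
    (hnadj : ¬Γ.Adj v₀ u₀) : ∀ b, amalgamSide Γ S v₀ b ⊂ S
  | true => (Set.ssubset_iff_of_subset (amalgamSide_subset hv₀ true)).2 ⟨u₀, hu₀, by
      rintro (h | ⟨-, h⟩)
      exacts [hne h.symm, hnadj h]⟩
  | false =>
    (Set.ssubset_iff_of_subset (amalgamSide_subset hv₀ false)).2 ⟨v₀, hv₀, fun h => h.2 rfl⟩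

def amalgamDiagram (b : Bool) :
    vsub Γ G (S ∩ Γ.neighborSet v₀) →* vsub Γ G (amalgamSide Γ S v₀ b) :=
  Subgroup.inclusion (vsub_mono (link_subset_amalgamSide Γ S v₀ b))

def amalgamToGraphProduct : PushoutI (amalgamDiagram Γ G S v₀) →* GraphProduct Γ G :=
  PushoutI.lift (fun b => (vsub Γ G (amalgamSide Γ S v₀ b)).subtype) (vsub Γ G _).subtype
    fun _ => Subgroup.subtype_comp_inclusion _

theorem amalgamToGraphProduct_of (b : Bool) (y : vsub Γ G (amalgamSide Γ S v₀ b)) :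
    amalgamToGraphProduct Γ G S v₀ (PushoutI.of b y) = y :=
  PushoutI.lift_of ..

open scoped Classical in
noncomputable def vertexToAmalgam (v : V) : G v →* PushoutI (amalgamDiagram Γ G S v₀) :=
  if hv : v = v₀ then
    (PushoutI.of true).comp (ofVsub Γ G (A := amalgamSide Γ S v₀ true) (.inl hv))
  else if hS : v ∈ S then
    (PushoutI.of false).comp (ofVsub Γ G (A := amalgamSide Γ S v₀ false) ⟨hS, hv⟩)
  else 1

theorem vertexToAmalgam_of_mem_link {w : V} (hw : w ∈ S ∩ Γ.neighborSet v₀) (g : G w) :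
    vertexToAmalgam Γ G S v₀ w g =
      PushoutI.of true (ofVsub Γ G (Set.mem_insert_of_mem v₀ hw) g) := by
  have hne : w ≠ v₀ := (Γ.ne_of_adj hw.2).symm
  simp only [vertexToAmalgam, dif_neg hne, dif_pos hw.1, MonoidHom.comp_apply]
  exact (PushoutI.of_apply_eq_base _ false (ofVsub Γ G hw g)).trans
    (PushoutI.of_apply_eq_base _ true _).symm

theorem commute_vertexToAmalgam {u w : V} (h : Γ.Adj u w) (g : G u) (k : G w) :
    Commute (vertexToAmalgam Γ G S v₀ u g) (vertexToAmalgam Γ G S v₀ w k) := by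
  wlog hu : u ≠ v₀ generalizing u w
  · exact (this h.symm k g (fun hw => h.ne ((not_not.1 hu).trans hw.symm))).symm
  by_cases huS : u ∈ S
  swap
  · simp [vertexToAmalgam, hu, huS]
  by_cases hw : w = v₀
  · subst hw
    rw [vertexToAmalgam_of_mem_link Γ G S w ⟨huS, h.symm⟩]
    simp only [vertexToAmalgam, dif_pos, MonoidHom.comp_apply]
    exact (commute_ofVsub h _ _ g k).map _
  by_cases hwS : w ∈ S
  · simp only [vertexToAmalgam, dif_neg hu, dif_pos huS, dif_neg hw, dif_pos hwS,
      MonoidHom.comp_apply]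
    exact (commute_ofVsub h _ _ g k).map _
  · simp [vertexToAmalgam, hw, hwS]

noncomputable def graphProductToAmalgam :
    GraphProduct Γ G →* PushoutI (amalgamDiagram Γ G S v₀) :=
  lift Γ (vertexToAmalgam Γ G S v₀) fun _ _ h => commute_vertexToAmalgam Γ G S v₀ h

theorem amalgamToGraphProduct_graphProductToAmalgam {x : GraphProduct Γ G}
    (hx : x ∈ vsub Γ G S) :
    amalgamToGraphProduct Γ G S v₀ (graphProductToAmalgam Γ G S v₀ x) = x := by
  refine vsub_le (H := MonoidHom.eqLocus ((amalgamToGraphProduct Γ G S v₀).comp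
    (graphProductToAmalgam Γ G S v₀)) (MonoidHom.id _)) (fun a ha g => ?_) hx
  change amalgamToGraphProduct Γ G S v₀ (lift Γ _ _ (of Γ G a g)) = of Γ G a g
  rw [lift_of]
  by_cases hv : a = v₀
  · subst hv
    simp only [vertexToAmalgam, dif_pos, MonoidHom.comp_apply, amalgamToGraphProduct_of]
    rfl
  · simp only [vertexToAmalgam, dif_neg hv, dif_pos ha, MonoidHom.comp_apply,
      amalgamToGraphProduct_of]
    rfl

variable {Γ G S} in
theorem exists_conj_mem_vsub_amalgamSide (F : Subgroup (GraphProduct Γ G)) [Finite F]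
    (hFS : F ≤ vsub Γ G S) :
    ∃ (q : GraphProduct Γ G) (b : Bool),
      ∀ x ∈ F, q * x * q⁻¹ ∈ vsub Γ G (amalgamSide Γ S v₀ b) := by
  have : Finite (F.map (graphProductToAmalgam Γ G S v₀)) :=
    Finite.of_surjective _ ((graphProductToAmalgam Γ G S v₀).subgroupMap_surjective F)
  obtain ⟨p, b, hp⟩ := PushoutI.exists_mul_mul_inv_mem_range_of_finite
    (φ := amalgamDiagram Γ G S v₀) (fun _ => Subgroup.inclusion_injective _)
    (F.map (graphProductToAmalgam Γ G S v₀))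
  refine ⟨amalgamToGraphProduct Γ G S v₀ p, b, fun x hx => ?_⟩
  obtain ⟨y, hy⟩ := hp _ (Subgroup.mem_map_of_mem _ hx)
  have := congrArg (amalgamToGraphProduct Γ G S v₀) hy
  rw [map_mul, map_mul, map_inv, amalgamToGraphProduct_graphProductToAmalgam Γ G S v₀ (hFS hx),
    amalgamToGraphProduct_of] at this
  exact this ▸ y.2

end Amalgam

theorem exists_conj_mem_vsub_complete {S : Set V} (hS : S.Finite)
    (F : Subgroup (GraphProduct Γ G)) [Finite F] (hFS : F ≤ vsub Γ G S) :
    ∃ C ⊆ S, C.Pairwise Γ.Adj ∧ ∃ g, ∀ x ∈ F, g * x * g⁻¹ ∈ vsub Γ G C := by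
  induction hn : S.ncard using Nat.strong_induction_on generalizing S F with
  | _ n ih =>
  by_cases hC : S.Pairwise Γ.Adj
  · exact ⟨S, subset_rfl, hC, 1, fun x hx => by simpa using hFS hx⟩
  obtain ⟨v₀, hv₀, u₀, hu₀, hne, hnadj⟩ : ∃ v₀ ∈ S, ∃ u₀ ∈ S, v₀ ≠ u₀ ∧ ¬Γ.Adj v₀ u₀ := by
    simpa [Set.Pairwise] using hC
  obtain ⟨q, b, hq⟩ := exists_conj_mem_vsub_amalgamSide v₀ F hFS
  have := Finite.of_surjective _ ((MulAut.conj q).toMonoidHom.subgroupMap_surjective F)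
  have hlt := hn ▸ Set.ncard_lt_ncard (amalgamSide_ssubset hv₀ hu₀ hne hnadj b) hS
  obtain ⟨C, hCS, hC, g, hg⟩ := ih _ hlt (hS.subset (amalgamSide_subset hv₀ b))
    (F.map (MulAut.conj q).toMonoidHom) (by rintro _ ⟨x, hx, rfl⟩; exact hq x hx) rfl
  refine ⟨C, hCS.trans (amalgamSide_subset hv₀ b), hC, g * q, fun x hx => ?_⟩
  simpa [mul_assoc] using hg _ ⟨x, hx, rfl⟩

end GraphProduct

/-- Every finite subgroup `F` of `G` can be conjugated into `G(C)` for some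
complete subset `C ⊆ V`. -/
theorem graphProduct_finite_subgroup_conj_complete {V : Type*} [Fintype V] (Γ : SimpleGraph V)
    (G : V → Type*) [∀ v, Group (G v)]
    (F : Subgroup (GraphProduct Γ G)) (hF : Finite F) :
    ∃ C : Set V, C.Pairwise Γ.Adj ∧ ∃ g : GraphProduct Γ G,
      ∀ x ∈ F, g * x * g⁻¹ ∈ GraphProduct.vsub Γ G C := by
  obtain ⟨C, -, hC, g, hg⟩ := GraphProduct.exists_conj_mem_vsub_complete Set.finite_univ F
    (by rw [GraphProduct.vsub_univ]; exact le_top)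
  exact ⟨C, hC, g, hg⟩
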